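/- arXiv:1607.05737 — 3 statements merged into one kernel-verified Lean document; each statement's English description precedes it below -/
import Mathlib

section
/- Let X be a real Hilbert space, F : X → X monotone (⟨F(x) - F(x̃), x - x̃⟩ ≥ 0 for all x, x̃), α > 0, δ ≥ 0, y, y^δ ∈ X with ‖y - y^δ‖ ≤ δ, x̄ ∈ X, and let x† satisfy F(x†) = y. Suppose x_α^δ ∈ X satisfies F(x_α^δ) + α(x_α^δ - x̄) = y^δ. Then ‖x_α^δ - x†‖² ≤ ⟨x† - x̄, x† - x_α^δ⟩ + (δ/α)‖x_α^δ - x†‖. -/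
open scoped RealInnerProductSpace

-- Monotonicity tested at `xad` and `xdag`, after splitting `xad - xbar = (xad - xdag) + (xdag - xbar)`.
lemma mul_norm_sub_sq_le_of_monotone {X : Type*} [NormedAddCommGroup X] [InnerProductSpace ℝ X]
    {F : X → X} (hmon : ∀ x x' : X, 0 ≤ ⟪F x - F x', x - x'⟫) {α : ℝ} {y yδ xbar xdag xad : X}
    (hsol : F xdag = y) (hreg : F xad + α • (xad - xbar) = yδ) :
    α * ‖xad - xdag‖ ^ 2 ≤ α * ⟪xdag - xbar, xdag - xad⟫ + ⟪yδ - y, xad - xdag⟫ := by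
  have hdiff : F xad - F xdag = (yδ - y) - α • (xad - xdag) - α • (xdag - xbar) := by
    rw [← hreg, hsol, smul_sub, smul_sub, smul_sub]; abel
  have hcross : ⟪xdag - xbar, xad - xdag⟫ = -⟪xdag - xbar, xdag - xad⟫ := by
    rw [← inner_neg_right, neg_sub]
  have h := hmon xad xdag
  rw [hdiff, inner_sub_left, inner_sub_left, real_inner_smul_left, real_inner_smul_left,
    real_inner_self_eq_norm_sq, hcross] at h
  linarith

theorem stmt_6_general {X : Type*} [NormedAddCommGroup X] [InnerProductSpace ℝ X]
    (F : X → X) (hmon : ∀ x x' : X, 0 ≤ ⟪F x - F x', x - x'⟫)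
    (α δ : ℝ) (hα : 0 < α)
    (y yδ xbar xdag xad : X) (hnoise : ‖y - yδ‖ ≤ δ)
    (hsol : F xdag = y) (hreg : F xad + α • (xad - xbar) = yδ) :
    ‖xad - xdag‖ ^ 2 ≤ ⟪xdag - xbar, xdag - xad⟫ + (δ / α) * ‖xad - xdag‖ := by
  have hdata : ⟪yδ - y, xad - xdag⟫ ≤ δ * ‖xad - xdag‖ :=
    (real_inner_le_norm _ _).trans <|
      mul_le_mul_of_nonneg_right (by rwa [norm_sub_rev]) (norm_nonneg _)
  have hmain := mul_norm_sub_sq_le_of_monotone hmon hsol hreg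
  rw [div_mul_eq_mul_div, ← mul_le_mul_iff_of_pos_left hα, mul_add, mul_div_cancel₀ _ hα.ne']
  linarith

theorem stmt_6 {X : Type*} [NormedAddCommGroup X] [InnerProductSpace ℝ X] [CompleteSpace X]
    (F : X → X) (hmon : ∀ x x' : X, 0 ≤ ⟪F x - F x', x - x'⟫)
    (α δ : ℝ) (hα : 0 < α) (hδ : 0 ≤ δ)
    (y yδ xbar xdag xad : X) (hnoise : ‖y - yδ‖ ≤ δ)
    (hsol : F xdag = y) (hreg : F xad + α • (xad - xbar) = yδ) :
    ‖xad - xdag‖ ^ 2 ≤ ⟪xdag - xbar, xdag - xad⟫ + (δ / α) * ‖xad - xdag‖ :=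
  stmt_6_general F hmon α δ hα y yδ xbar xdag xad hnoise hsol hreg
end

section
/- Consider X = L²(0,1) and the Cesàro operator C defined by (Cx)(s) = (1/s)∫₀^s x(t) dt. Let u ∈ L²(0,1) be the Heaviside-type function u(t) = 0 for t < 1/2 and u(t) = 1 for t ≥ 1/2. Then there exists a constant K > 0 such that for all sufficiently large R > 0 there exists w ∈ L²(0,1) with ‖w‖ ≤ R and ‖u - Cw‖ ≤ K/R. -/
/-!
Take `w = R² 𝟙_(1/2, 1/2+δ] + 𝟙_(1/2+δ, 1]` with `δ = 1/(2R²)`. The spike carries mass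
`R² δ = 1/2`, so past it `∫₀ˢ w = s - δ` and `u - Cw = δ/s ≤ 2δ`, while on the spike `0 ≤ Cw ≤ 1`.
Hence `|u - Cw| ≤ 𝟙_[1/2, 1/2+δ] + 2δ`, giving `‖u - Cw‖ ≤ √δ + 2δ ≤ 1/R`, and
`‖w‖ ≤ R² √δ + 1 = R/√2 + 1 ≤ R` once `R ≥ 4`.
-/

open MeasureTheory Set

lemma eLpNorm_two_indicator_const_le {α : Type*} [MeasurableSpace α] {μ : Measure α}
    {s : Set α} {c m : ℝ} (hc : 0 ≤ c) (hm : 0 ≤ m) (hs : μ s ≤ ENNReal.ofReal m) :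
    eLpNorm (s.indicator fun _ => c) 2 μ ≤ ENNReal.ofReal (c * √m) := by
  calc eLpNorm (s.indicator fun _ => c) 2 μ ≤ ‖c‖ₑ * μ s ^ (1 / (2 : ℝ)) := by
        simpa using eLpNorm_indicator_const_le c 2 (μ := μ) (s := s)
    _ ≤ ENNReal.ofReal c * ENNReal.ofReal m ^ (1 / (2 : ℝ)) := by
        rw [Real.enorm_eq_ofReal hc]; gcongr
    _ = ENNReal.ofReal (c * √m) := by
        rw [Real.sqrt_eq_rpow, ENNReal.ofReal_mul hc, ENNReal.ofReal_rpow_of_nonneg hm (by norm_num)]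

lemma setIntegral_Ioc_indicator_Ioc {a : ℝ} (ha : 0 ≤ a) (b c s : ℝ) :
    ∫ t in Ioc 0 s, (Ioc a b).indicator (fun _ => c) t = max (min s b - a) 0 * c := by
  rw [setIntegral_indicator measurableSet_Ioc, Ioc_inter_Ioc, setIntegral_const,
    Real.volume_real_Ioc, max_eq_right ha, smul_eq_mul]

noncomputable def cesaro (w : ℝ → ℝ) (s : ℝ) : ℝ := s⁻¹ * ∫ t in Ioc 0 s, w t

noncomputable def stepAtHalf (s : ℝ) : ℝ := if s < 1 / 2 then 0 else 1

noncomputable def spikeWidth (R : ℝ) : ℝ := (2 * R ^ 2)⁻¹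

noncomputable def spikeEnd (R : ℝ) : ℝ := 1 / 2 + spikeWidth R

-- `Ioc` rather than the paper's `Ico`, so that `Ioc 0 s ∩ Ioc a b` is again an interval.
noncomputable def cesaroWitness (R : ℝ) : ℝ → ℝ :=
  (Ioc (1 / 2) (spikeEnd R)).indicator (fun _ => R ^ 2)
    + (Ioc (spikeEnd R) 1).indicator (fun _ => 1)

section
variable {R : ℝ}

lemma spikeWidth_pos (hR : 0 < R) : 0 < spikeWidth R := by unfold spikeWidth; positivity

lemma sq_mul_spikeWidth (hR : 0 < R) : R ^ 2 * spikeWidth R = 1 / 2 := by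
  unfold spikeWidth; field_simp

lemma integral_cesaroWitness {s : ℝ} (hs : s ≤ 1) :
    ∫ t in Ioc 0 s, cesaroWitness R t
      = max (min s (spikeEnd R) - 1 / 2) 0 * R ^ 2 + max (s - spikeEnd R) 0 := by
  have hb : 0 ≤ spikeEnd R := by
    unfold spikeEnd spikeWidth; positivity
  simp only [cesaroWitness, Pi.add_apply]
  rw [integral_add, setIntegral_Ioc_indicator_Ioc (by norm_num),
    setIntegral_Ioc_indicator_Ioc hb, min_eq_left hs, mul_one]
  all_goals exact (integrableOn_const measure_Ioc_lt_top.ne).indicator measurableSet_Ioc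

lemma abs_stepAtHalf_sub_cesaro_le (hR : 0 < R) {s : ℝ} (hs : s ∈ Ioc 0 1) :
    |stepAtHalf s - cesaro (cesaroWitness R) s|
      ≤ (Icc (1 / 2) (spikeEnd R)).indicator (fun _ => 1) s + (R ^ 2)⁻¹ := by
  obtain ⟨hs0, hs1⟩ := hs
  have hδ := spikeWidth_pos hR
  have hRδ := sq_mul_spikeWidth hR
  have hb : spikeEnd R = 1 / 2 + spikeWidth R := rfl
  rw [cesaro, integral_cesaroWitness hs1]
  rcases lt_or_ge s (1 / 2) with hlt | hge
  · rw [max_eq_right (by linarith [min_le_left s (spikeEnd R)]), max_eq_right (by linarith),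
      stepAtHalf, if_pos hlt]
    simp only [zero_mul, add_zero, mul_zero, sub_zero, abs_zero]
    exact add_nonneg (indicator_nonneg (fun _ _ => zero_le_one) s) (by positivity)
  rw [stepAtHalf, if_neg (not_lt.2 hge)]
  rcases le_or_gt s (spikeEnd R) with hle | hgt
  · rw [min_eq_left hle, max_eq_left (by linarith), max_eq_right (by linarith),
      indicator_of_mem (mem_Icc.2 ⟨hge, hle⟩), add_zero]
    have hmean_nonneg : 0 ≤ s⁻¹ * ((s - 1 / 2) * R ^ 2) := by
      have : 0 ≤ s - 1 / 2 := by linarith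
      positivity
    have hmean_le : s⁻¹ * ((s - 1 / 2) * R ^ 2) ≤ 1 := by
      rw [inv_mul_le_iff₀ hs0]
      nlinarith
    have := inv_pos.2 (pow_pos hR 2)
    rw [abs_le]
    constructor <;> linarith
  · rw [min_eq_right hgt.le, max_eq_left (by linarith), max_eq_left (by linarith),
      indicator_of_notMem (fun h => (not_le.2 hgt) h.2), zero_add]
    have hprimitive : (spikeEnd R - 1 / 2) * R ^ 2 + (s - spikeEnd R) = s - spikeWidth R := by
      rw [hb]
      linear_combination hRδ
    have hmean : 1 - s⁻¹ * (s - spikeWidth R) = spikeWidth R / s := by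
      field_simp
      ring
    have hwidth : spikeWidth R = (R ^ 2)⁻¹ / 2 := by unfold spikeWidth; ring
    rw [hprimitive, hmean, abs_of_pos (by positivity), div_le_iff₀ hs0, hwidth]
    nlinarith [inv_pos.2 (pow_pos hR 2)]

lemma sqrt_spikeWidth_le (hR : 0 < R) : √(spikeWidth R) ≤ 3 / (4 * R) := by
  rw [Real.sqrt_le_left (by positivity), spikeWidth, div_pow, inv_le_iff_one_le_mul₀ (by positivity)]
  field_simp
  norm_num

lemma memLp_cesaroWitness (R : ℝ) : MemLp (cesaroWitness R) 2 (volume.restrict (Ioc 0 1)) :=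
  have hfin (a b : ℝ) : volume.restrict (Ioc 0 1) (Ioc a b) ≠ ⊤ :=
    ((Measure.restrict_apply_le _ _).trans_lt measure_Ioc_lt_top).ne
  MemLp.add (ε := ℝ) (memLp_indicator_const 2 measurableSet_Ioc _ (Or.inr (hfin _ _)))
    (memLp_indicator_const 2 measurableSet_Ioc _ (Or.inr (hfin _ _)))

lemma eLpNorm_cesaroWitness_le (hR : 4 ≤ R) :
    eLpNorm (cesaroWitness R) 2 (volume.restrict (Ioc 0 1)) ≤ ENNReal.ofReal R := by
  have hR0 : 0 < R := by linarith
  have hδ := spikeWidth_pos hR0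
  calc eLpNorm (cesaroWitness R) 2 (volume.restrict (Ioc 0 1))
      ≤ eLpNorm ((Ioc (1 / 2) (spikeEnd R)).indicator (fun _ => R ^ 2)) 2 (volume.restrict (Ioc 0 1))
        + eLpNorm ((Ioc (spikeEnd R) 1).indicator (fun _ => (1 : ℝ))) 2 (volume.restrict (Ioc 0 1)) :=
        eLpNorm_add_le (aestronglyMeasurable_const.indicator measurableSet_Ioc)
          (aestronglyMeasurable_const.indicator measurableSet_Ioc) one_le_two
    _ ≤ ENNReal.ofReal (R ^ 2 * √(spikeWidth R)) + ENNReal.ofReal (1 * √1) := by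
        gcongr
        · refine eLpNorm_two_indicator_const_le (by positivity) hδ.le
            ((Measure.restrict_apply_le _ _).trans ?_)
          rw [Real.volume_Ioc, spikeEnd, add_sub_cancel_left]
        · refine eLpNorm_two_indicator_const_le zero_le_one zero_le_one
            ((measure_mono (subset_univ _)).trans ?_)
          rw [Measure.restrict_apply_univ, Real.volume_Ioc, sub_zero]
    _ ≤ ENNReal.ofReal R := by
        rw [← ENNReal.ofReal_add (by positivity) (by positivity)]
        gcongr
        have := mul_le_mul_of_nonneg_left (sqrt_spikeWidth_le hR0) (sq_nonneg R)
        rw [Real.sqrt_one, one_mul]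
        calc R ^ 2 * √(spikeWidth R) + 1 ≤ R ^ 2 * (3 / (4 * R)) + 1 := by linarith
          _ ≤ R := by field_simp; linarith

lemma eLpNorm_stepAtHalf_sub_cesaro_le (hR : 4 ≤ R) :
    eLpNorm (fun s => stepAtHalf s - cesaro (cesaroWitness R) s) 2 (volume.restrict (Ioc 0 1))
      ≤ ENNReal.ofReal (1 / R) := by
  have hR0 : 0 < R := by linarith
  have hδ := spikeWidth_pos hR0
  have hunit : volume.restrict (Ioc (0 : ℝ) 1) univ = ENNReal.ofReal 1 := by
    rw [Measure.restrict_apply_univ, Real.volume_Ioc, sub_zero]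
  calc eLpNorm (fun s => stepAtHalf s - cesaro (cesaroWitness R) s) 2 (volume.restrict (Ioc 0 1))
      ≤ eLpNorm ((Icc (1 / 2) (spikeEnd R)).indicator (fun _ => 1)
          + univ.indicator (fun _ => (R ^ 2)⁻¹)) 2 (volume.restrict (Ioc 0 1)) := by
        refine eLpNorm_mono_ae ((ae_restrict_mem measurableSet_Ioc).mono fun s hs => ?_)
        rw [indicator_univ, Real.norm_eq_abs, Real.norm_eq_abs]
        exact (abs_stepAtHalf_sub_cesaro_le hR0 hs).trans (le_abs_self _)
    _ ≤ eLpNorm ((Icc (1 / 2) (spikeEnd R)).indicator (fun _ => (1 : ℝ))) 2 (volume.restrict (Ioc 0 1))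
        + eLpNorm (univ.indicator (fun _ => (R ^ 2)⁻¹)) 2 (volume.restrict (Ioc 0 1)) :=
        eLpNorm_add_le (aestronglyMeasurable_const.indicator measurableSet_Icc)
          (aestronglyMeasurable_const.indicator MeasurableSet.univ) one_le_two
    _ ≤ ENNReal.ofReal (1 * √(spikeWidth R)) + ENNReal.ofReal ((R ^ 2)⁻¹ * √1) := by
        gcongr
        · refine eLpNorm_two_indicator_const_le zero_le_one hδ.le
            ((Measure.restrict_apply_le _ _).trans ?_)
          rw [Real.volume_Icc, spikeEnd, add_sub_cancel_left]
        · exact eLpNorm_two_indicator_const_le (by positivity) zero_le_one hunit.le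
    _ ≤ ENNReal.ofReal (1 / R) := by
        rw [← ENNReal.ofReal_add (by positivity) (by positivity)]
        gcongr
        have := sqrt_spikeWidth_le hR0
        have : (R ^ 2)⁻¹ ≤ 1 / (4 * R) := by
          rw [inv_le_comm₀ (by positivity) (by positivity)]; field_simp; nlinarith
        calc 1 * √(spikeWidth R) + (R ^ 2)⁻¹ * √1 ≤ 3 / (4 * R) + 1 / (4 * R) := by
              rw [one_mul, Real.sqrt_one, mul_one]; linarith
          _ = 1 / R := by field_simp; norm_num

end

theorem stmt_15 :
    ∃ K > (0 : ℝ), ∃ R₀ > (0 : ℝ), ∀ R ≥ R₀,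
      ∃ w : ℝ → ℝ,
        MemLp w 2 (volume.restrict (Set.Ioc (0 : ℝ) 1)) ∧
        eLpNorm w 2 (volume.restrict (Set.Ioc (0 : ℝ) 1)) ≤ ENNReal.ofReal R ∧
        eLpNorm
          (fun s : ℝ =>
            (if s < 1 / 2 then (0 : ℝ) else 1) - s⁻¹ * ∫ t in Set.Ioc (0 : ℝ) s, w t)
          2 (volume.restrict (Set.Ioc (0 : ℝ) 1)) ≤ ENNReal.ofReal (K / R) :=
  ⟨1, one_pos, 4, by norm_num, fun R hR => ⟨cesaroWitness R, memLp_cesaroWitness R,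
    eLpNorm_cesaroWitness_le hR, eLpNorm_stepAtHalf_sub_cesaro_le hR⟩⟩
end

section
/- Let X be a real Hilbert space, F : X → X monotone, and suppose a conditional stability estimate ‖x - x†‖ ≤ φ(‖F(x) - F(x†)‖) holds for all x in the closed ball B_r(x†), where φ is a concave index function. Assume α(δ) = cδ with c > 0, r > ‖x† - x̄‖ + 1/c, and x^δ solves F(x^δ) + α(δ)(x^δ - x̄) = y^δ with ‖F(x†) - y^δ‖ ≤ δ. Then x^δ ∈ B_r(x†) and ‖x^δ - x†‖ ≤ 2·max(1, c‖x† - x̄‖)·φ(δ). -/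
open scoped RealInnerProductSpace

/-!
Write `e = x - x†` and `d = F x - F x†`. The regularized equation says that
`d + α e = (y - F x†) - α (x† - x̄)`, whose norm is at most `δ + α ‖x† - x̄‖`, and monotonicity
gives `⟪d, e⟫ ≥ 0`, so that both `‖d‖` and `α ‖e‖` are bounded by `‖d + α e‖`. With `α = c δ`
the bound on `‖e‖` places `x` in the ball where the stability estimate applies, and the bound
`‖d‖ ≤ 2 max(1, c ‖x† - x̄‖) δ` is transported through `φ` by monotonicity and by
`φ (t s) ≤ t φ s` for `t ≥ 1`, a consequence of concavity and `φ 0 = 0`.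
-/

theorem ConcaveOn.map_mul_le_mul_of_one_le {φ : ℝ → ℝ} (hφ : ConcaveOn ℝ (Set.Ici 0) φ)
    (hφ0 : 0 ≤ φ 0) {t s : ℝ} (ht : 1 ≤ t) (hs : 0 ≤ s) : φ (t * s) ≤ t * φ s := by
  have ht₀ : 0 < t := by linarith
  have hcomb := hφ.2 (Set.mem_Ici.2 (by positivity : 0 ≤ t * s)) Set.self_mem_Ici
    (inv_nonneg.2 ht₀.le) (sub_nonneg.2 (inv_le_one_of_one_le₀ ht)) (add_sub_cancel _ _)
  have harg : t⁻¹ • (t * s) + (1 - t⁻¹) • (0 : ℝ) = s := by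
    simp only [smul_eq_mul, mul_zero, add_zero, inv_mul_cancel_left₀ ht₀.ne']
  rw [harg, smul_eq_mul, smul_eq_mul] at hcomb
  have : t⁻¹ * φ (t * s) ≤ φ s := by
    nlinarith [mul_nonneg (sub_nonneg.2 (inv_le_one_of_one_le₀ ht)) hφ0]
  rwa [inv_mul_le_iff₀ ht₀] at this

theorem norm_le_norm_add_of_inner_nonneg {E : Type*} [NormedAddCommGroup E]
    [InnerProductSpace ℝ E] {u v : E} (h : 0 ≤ ⟪u, v⟫) : ‖u‖ ≤ ‖u + v‖ := by
  refine le_of_sq_le_sq ?_ (norm_nonneg _)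
  rw [norm_add_sq_real]
  nlinarith [sq_nonneg ‖v‖]

section Regularization

variable {E : Type*} [NormedAddCommGroup E] [InnerProductSpace ℝ E]
  {F : E → E} {x x₀ xbar y : E} {α : ℝ}

theorem norm_regularized_residual_le (hα : 0 ≤ α) (hreg : F x + α • (x - xbar) = y) :
    ‖F x - F x₀ + α • (x - x₀)‖ ≤ ‖F x₀ - y‖ + α * ‖x₀ - xbar‖ := by
  have hsplit : F x - F x₀ + α • (x - x₀) = (y - F x₀) - α • (x₀ - xbar) := by
    rw [← hreg]; module
  calc ‖F x - F x₀ + α • (x - x₀)‖ ≤ ‖y - F x₀‖ + ‖α • (x₀ - xbar)‖ := by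
        rw [hsplit]; exact norm_sub_le _ _
    _ = ‖F x₀ - y‖ + α * ‖x₀ - xbar‖ := by
        rw [norm_sub_rev, norm_smul, Real.norm_of_nonneg hα]

theorem norm_sub_le_of_regularized (hα : 0 ≤ α) (hmon : 0 ≤ ⟪F x - F x₀, x - x₀⟫)
    (hreg : F x + α • (x - xbar) = y) :
    α * ‖x - x₀‖ ≤ ‖F x₀ - y‖ + α * ‖x₀ - xbar‖ := by
  have hinner : 0 ≤ ⟪α • (x - x₀), F x - F x₀⟫ := by
    rw [real_inner_smul_left, real_inner_comm]; exact mul_nonneg hα hmon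
  calc α * ‖x - x₀‖ = ‖α • (x - x₀)‖ := by rw [norm_smul, Real.norm_of_nonneg hα]
    _ ≤ ‖F x - F x₀ + α • (x - x₀)‖ := by
        rw [add_comm]; exact norm_le_norm_add_of_inner_nonneg hinner
    _ ≤ ‖F x₀ - y‖ + α * ‖x₀ - xbar‖ := norm_regularized_residual_le hα hreg

theorem norm_map_sub_le_of_regularized (hα : 0 ≤ α) (hmon : 0 ≤ ⟪F x - F x₀, x - x₀⟫)
    (hreg : F x + α • (x - xbar) = y) :
    ‖F x - F x₀‖ ≤ ‖F x₀ - y‖ + α * ‖x₀ - xbar‖ :=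
  (norm_le_norm_add_of_inner_nonneg (by rw [real_inner_smul_right]; exact mul_nonneg hα hmon)).trans
    (norm_regularized_residual_le hα hreg)

end Regularization

theorem stmt_18_general {X : Type*} [NormedAddCommGroup X] [InnerProductSpace ℝ X]
    (F : X → X) (hmon : ∀ x x' : X, 0 ≤ ⟪F x - F x', x - x'⟫)
    (xdag xbar : X) (r : ℝ)
    (φ : ℝ → ℝ)
    (hφmono : StrictMonoOn φ (Set.Ici 0)) (hφ0 : φ 0 = 0)
    (hφconc : ConcaveOn ℝ (Set.Ici 0) φ)
    (hstab : ∀ x : X, ‖x - xdag‖ ≤ r → ‖x - xdag‖ ≤ φ (‖F x - F xdag‖))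
    (c δ : ℝ) (hc : 0 < c) (hδ : 0 < δ)
    (hr : ‖xdag - xbar‖ + 1 / c < r)
    (yδ xδ : X) (hnoise : ‖F xdag - yδ‖ ≤ δ)
    (hreg : F xδ + (c * δ) • (xδ - xbar) = yδ) :
    ‖xδ - xdag‖ ≤ r ∧ ‖xδ - xdag‖ ≤ 2 * max 1 (c * ‖xdag - xbar‖) * φ δ := by
  set M := ‖xdag - xbar‖
  set K := max 1 (c * M)
  have hcδ : 0 < c * δ := mul_pos hc hδ
  have herr : ‖xδ - xdag‖ ≤ M + 1 / c := by
    have h := norm_sub_le_of_regularized hcδ.le (hmon xδ xdag) hreg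
    rw [← mul_le_mul_iff_of_pos_left hcδ]
    calc c * δ * ‖xδ - xdag‖ ≤ δ + c * δ * M := by linarith
      _ = c * δ * (M + 1 / c) := by field_simp; ring
  have hball : ‖xδ - xdag‖ ≤ r := herr.trans hr.le
  have hres : ‖F xδ - F xdag‖ ≤ 2 * K * δ := by
    calc ‖F xδ - F xdag‖ ≤ 1 * δ + c * M * δ := by
          linarith [norm_map_sub_le_of_regularized hcδ.le (hmon xδ xdag) hreg]
      _ ≤ K * δ + K * δ := by gcongr; exacts [le_max_left _ _, le_max_right _ _]
      _ = 2 * K * δ := by ring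
  have hK : 1 ≤ 2 * K := by linarith [le_max_left 1 (c * M)]
  refine ⟨hball, ?_⟩
  calc ‖xδ - xdag‖ ≤ φ ‖F xδ - F xdag‖ := hstab xδ hball
    _ ≤ φ (2 * K * δ) :=
        hφmono.monotoneOn (norm_nonneg _) (Set.mem_Ici.2 (by positivity)) hres
    _ ≤ 2 * K * φ δ := hφconc.map_mul_le_mul_of_one_le hφ0.ge hK hδ.le

theorem stmt_18 {X : Type*} [NormedAddCommGroup X] [InnerProductSpace ℝ X] [CompleteSpace X]
    (F : X → X) (hmon : ∀ x x' : X, 0 ≤ ⟪F x - F x', x - x'⟫)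
    (xdag xbar : X) (r : ℝ)
    (φ : ℝ → ℝ) (hφcont : ContinuousOn φ (Set.Ici 0))
    (hφmono : StrictMonoOn φ (Set.Ici 0)) (hφ0 : φ 0 = 0)
    (hφconc : ConcaveOn ℝ (Set.Ici 0) φ)
    (hstab : ∀ x : X, ‖x - xdag‖ ≤ r → ‖x - xdag‖ ≤ φ (‖F x - F xdag‖))
    (c δ : ℝ) (hc : 0 < c) (hδ : 0 < δ)
    (hr : ‖xdag - xbar‖ + 1 / c < r)
    (yδ xδ : X) (hnoise : ‖F xdag - yδ‖ ≤ δ)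
    (hreg : F xδ + (c * δ) • (xδ - xbar) = yδ) :
    ‖xδ - xdag‖ ≤ r ∧ ‖xδ - xdag‖ ≤ 2 * max 1 (c * ‖xdag - xbar‖) * φ δ :=
  stmt_18_general F hmon xdag xbar r φ hφmono hφ0 hφconc hstab c δ hc hδ hr yδ xδ hnoise hreg
end
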